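/- The map (u, μ) ↦ u is a bijection between 𝒟⁺ and the set of all real-valued functions u ∈ H¹_loc(ℝ) such that the distribution u − u'' is a positive Borel measure on ℝ, the function u + u' belongs to L^∞(ℝ), and ∫_{−∞}^0 e^{−x}( u(x)² + u'(x)² ) dx < ∞. -/

import Mathlib

/-!
Put `f = e^{-x} (u + u')`. Then `f' = e^{-x} (u'' - u)`, so positivity of `u - u''` says that `f`
is nonincreasing: testing against `e^{-x} χ`, with `χ` a difference of two ramps, gives that the
averages of `f` over intervals of a fixed length decrease, and Lebesgue's differentiation theorem
turns this into a nonincreasing representative `g` of `f`. Since `e^s g(s)² = e^{-s} (u + u')²(s)`,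
the growth condition at `+∞` in the definition of `𝒟` forces `g ≥ 0`, and then
`e^{t-1} g(t)² ≤ ∫_{t-1}^t e^s g(s)² ds` bounds `u + u' = e^t g(t)` on `(-∞, 0]` by the condition
at `-∞` and near `+∞` by the condition at `+∞`; on the compact interval in between monotonicity
suffices. Conversely `|u + u'| ≤ C` gives `e^x ∫_x^∞ e^{-s} (u + u')² ≤ C²`, so
`(u, (u² + u'²) dx) ∈ 𝒟⁺`; and `u` determines `u'` almost everywhere, hence `μ` when `υ = 0`.
-/

open MeasureTheory Filter Set

noncomputable section

/-- An element of the phase space `𝒟`: a pair `(u, μ)` where `u ∈ H¹_loc(ℝ)` (recorded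
together with a derivative `u'`), `μ` is a positive Borel measure dominating
`(u² + u'²) dx` and `υ` is the excess measure, subject to the growth restrictions
at `-∞` and `+∞`. -/
structure PhaseD where
  u : ℝ → ℝ
  u' : ℝ → ℝ
  μ : Measure ℝ
  υ : Measure ℝ
  meas_u' : Measurable u'
  ftc : ∀ a b : ℝ, u b - u a = ∫ x in a..b, u' x
  locInt : LocallyIntegrable u' volume
  locSq : LocallyIntegrable (fun x => (u' x) ^ 2) volume
  decomp : μ = υ + volume.withDensity (fun x => ENNReal.ofReal ((u x) ^ 2 + (u' x) ^ 2))
  minusCond :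
    (∫⁻ s in Iio (0 : ℝ), ENNReal.ofReal (Real.exp (-s) * ((u s) ^ 2 + (u' s) ^ 2))) +
      (∫⁻ s in Iio (0 : ℝ), ENNReal.ofReal (Real.exp (-s)) ∂υ) < ⊤
  plusCond :
    Filter.limsup (fun x : ℝ =>
      ENNReal.ofReal (Real.exp x) *
        ((∫⁻ s in Ioi x, ENNReal.ofReal (Real.exp (-s) * (u s + u' s) ^ 2)) +
          ∫⁻ s in Ici x, ENNReal.ofReal (Real.exp (-s)) ∂υ)) Filter.atTop < ⊤

/-- The function `w̃(x) = -(u(log x) + u'(log x))/x`. -/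
def tildeW (D : PhaseD) : ℝ → ℝ := fun x => -(D.u (Real.log x) + D.u' (Real.log x)) / x

/-- The measure `υ̃`, i.e. the pushforward under `exp` of `e^{-s} dυ(s)`, so that
`υ̃(B) = ∫_{log B} e^{-s} dυ(s)` for Borel `B ⊆ (0,∞)` and `υ̃({0}) = 0`. -/
def tildeV (D : PhaseD) : Measure ℝ :=
  (D.υ.withDensity fun s => ENNReal.ofReal (Real.exp (-s))).map Real.exp

/-- Convergence of a sequence of pairs to a pair in `𝒟`. -/
def ConvD (Dk : ℕ → PhaseD) (D : PhaseD) : Prop :=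
  (∀ x : ℝ, Tendsto (fun k => (Dk k).u x) atTop (nhds (D.u x))) ∧
    ∀ᵐ x : ℝ ∂volume,
      Tendsto (fun k => ∫⁻ s in Iio x, ENNReal.ofReal (Real.exp (-s)) ∂(Dk k).μ) atTop
        (nhds (∫⁻ s in Iio x, ENNReal.ofReal (Real.exp (-s)) ∂D.μ))

/-- The functional `E(u,μ)`. -/
def Efun (D : PhaseD) : ENNReal :=
  ⨆ x : ℝ, ENNReal.ofReal (Real.exp (x / 2)) *
    ((∫⁻ s in Ioi x, ENNReal.ofReal (Real.exp (-s) * (D.u s + D.u' s) ^ 2)) +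
      ∫⁻ s in Ici x, ENNReal.ofReal (Real.exp (-s)) ∂D.υ) ^ (1 / 2 : ℝ)


/-- A compactly supported test function `h ∈ H¹_c(ℝ)`, recorded with its derivative. -/
def TestH1 (h h' : ℝ → ℝ) : Prop :=
  HasCompactSupport h ∧ Measurable h' ∧
    (∀ a b : ℝ, h b - h a = ∫ x in a..b, h' x) ∧ MemLp h' 2 volume

/-- The distribution `ω = u - u''` equals the positive Borel measure `ν`, i.e.
`∫ h dν = ∫ u h dx + ∫ u' h' dx` for every compactly supported `h ∈ H¹(ℝ)`. -/
def PosMeasRepr (D : PhaseD) (ν : Measure ℝ) : Prop :=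
  ∀ h h' : ℝ → ℝ, TestH1 h h' →
    ∫ x, h x ∂ν = (∫ x, D.u x * h x) + ∫ x, D.u' x * h' x
/-- The conditions on a function `u` characterising the image of `𝒟⁺` under
`(u,μ) ↦ u`: `u ∈ H¹_loc(ℝ)` real-valued, `u - u''` is a positive Borel measure,
`u + u' ∈ L^∞(ℝ)`, and `∫_{-∞}^0 e^{-x}(u² + u'²) dx < ∞`. -/
def GoodPlusU (u : ℝ → ℝ) : Prop :=
  ∃ u' : ℝ → ℝ, ∃ ν : Measure ℝ,
    Measurable u' ∧
    (∀ a b : ℝ, u b - u a = ∫ x in a..b, u' x) ∧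
    LocallyIntegrable u' volume ∧
    LocallyIntegrable (fun x => (u' x) ^ 2) volume ∧
    (∀ h h' : ℝ → ℝ, TestH1 h h' →
      ∫ x, h x ∂ν = (∫ x, u x * h x) + ∫ x, u' x * h' x) ∧
    MemLp (fun x => u x + u' x) ⊤ volume ∧
    (∫⁻ x in Iio (0 : ℝ),
        ENNReal.ofReal (Real.exp (-x) * ((u x) ^ 2 + (u' x) ^ 2))) < ⊤

open scoped ENNReal Topology

open Real

section WeakDerivative

variable {p p' q q' : ℝ → ℝ}

lemma MeasureTheory.LocallyIntegrable.intervalIntegrable {f : ℝ → ℝ}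
    (hf : LocallyIntegrable f volume) (a b : ℝ) : IntervalIntegrable f volume a b :=
  (hf.integrableOn_isCompact isCompact_uIcc).intervalIntegrable

lemma eq_add_integral_of_forall_sub_eq (hp : ∀ a b, p b - p a = ∫ x in a..b, p' x) (c : ℝ) :
    p = fun x => p c + ∫ t in c..x, p' t := by
  funext x
  linarith [hp c x]

lemma continuous_of_forall_sub_eq (hp : ∀ a b, p b - p a = ∫ x in a..b, p' x)
    (hp' : LocallyIntegrable p' volume) : Continuous p := by
  rw [eq_add_integral_of_forall_sub_eq hp 0]
  exact continuous_const.add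
    (intervalIntegral.continuous_primitive hp'.intervalIntegrable 0)

lemma absolutelyContinuousOnInterval_of_forall_sub_eq
    (hp : ∀ a b, p b - p a = ∫ x in a..b, p' x) (hp' : LocallyIntegrable p' volume) (a b : ℝ) :
    AbsolutelyContinuousOnInterval p a b := by
  rw [eq_add_integral_of_forall_sub_eq hp a]
  have hconst : AbsolutelyContinuousOnInterval (fun _ : ℝ => p a) a b :=
    (LipschitzWith.const (p a)).lipschitzOnWith.absolutelyContinuousOnInterval
  exact hconst.add ((hp'.intervalIntegrable a b).absolutelyContinuousOnInterval_intervalIntegral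
    left_mem_uIcc)

lemma ae_hasDerivAt_of_forall_sub_eq (hp : ∀ a b, p b - p a = ∫ x in a..b, p' x)
    (hp' : LocallyIntegrable p' volume) : ∀ᵐ x, HasDerivAt p (p' x) x := by
  filter_upwards [LocallyIntegrable.ae_hasDerivAt_integral hp'] with x hx
  rw [eq_add_integral_of_forall_sub_eq hp 0]
  exact (hx 0).const_add _

lemma ae_eq_of_forall_sub_eq (hp₁ : ∀ a b, p b - p a = ∫ x in a..b, p' x)
    (hp₂ : ∀ a b, p b - p a = ∫ x in a..b, q' x)
    (hp' : LocallyIntegrable p' volume) (hq' : LocallyIntegrable q' volume) : p' =ᵐ[volume] q' := by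
  filter_upwards [ae_hasDerivAt_of_forall_sub_eq hp₁ hp',
    ae_hasDerivAt_of_forall_sub_eq hp₂ hq'] with x h₁ h₂
  exact h₁.unique h₂

lemma mul_sub_mul_eq_integral (hp : ∀ a b, p b - p a = ∫ x in a..b, p' x)
    (hq : ∀ a b, q b - q a = ∫ x in a..b, q' x)
    (hp' : LocallyIntegrable p' volume) (hq' : LocallyIntegrable q' volume) (a b : ℝ) :
    p b * q b - p a * q a = ∫ x in a..b, p' x * q x + p x * q' x := by
  rw [← (absolutelyContinuousOnInterval_of_forall_sub_eq hp hp' a b).integral_deriv_mul_eq_sub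
    (absolutelyContinuousOnInterval_of_forall_sub_eq hq hq' a b)]
  refine intervalIntegral.integral_congr_ae ?_
  filter_upwards [ae_hasDerivAt_of_forall_sub_eq hp hp',
    ae_hasDerivAt_of_forall_sub_eq hq hq'] with x hpx hqx _
  rw [hpx.deriv, hqx.deriv]

end WeakDerivative

lemma integral_eq_intervalIntegral_of_eq_zero_off {F : ℝ → ℝ} {a b : ℝ} (hab : a ≤ b)
    (hF : ∀ t ∉ Icc a b, F t = 0) : ∫ t, F t = ∫ t in a..b, F t := by
  rw [intervalIntegral.integral_of_le hab, ← integral_Icc_eq_integral_Ioc,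
    setIntegral_eq_integral_of_forall_compl_eq_zero hF]

lemma memLp_of_abs_le_of_eq_zero_off {F : ℝ → ℝ} {a b M : ℝ} (hF : AEStronglyMeasurable F volume)
    (hM : ∀ t, |F t| ≤ M) (hF0 : ∀ t ∉ Icc a b, F t = 0) (p : ℝ≥0∞) : MemLp F p volume := by
  have hsupp : (Icc a b).indicator F = F :=
    indicator_eq_self.2 fun t ht => by_contra fun h => ht (hF0 t h)
  rw [← hsupp, memLp_indicator_iff_restrict measurableSet_Icc]
  have : IsFiniteMeasure (volume.restrict (Icc a b)) :=
    isFiniteMeasure_restrict.2 measure_Icc_lt_top.ne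
  exact MemLp.of_bound hF.restrict M (ae_of_all _ hM)

lemma MeasureTheory.LocallyIntegrable.mul_of_abs_le {f g : ℝ → ℝ} {M : ℝ}
    (hf : LocallyIntegrable f volume) (hg : AEStronglyMeasurable g volume) (hM : ∀ t, |g t| ≤ M) :
    LocallyIntegrable (fun t => f t * g t) volume :=
  (locallyIntegrable_iff).2 fun _ hK =>
    (hf.integrableOn_isCompact hK).mul_bdd hg.restrict (ae_of_all _ hM)

lemma exp_neg_sub_exp_neg_eq_integral (a b : ℝ) : exp (-b) - exp (-a) = ∫ t in a..b, -exp (-t) := by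
  have hderiv (t : ℝ) : HasDerivAt (fun s => exp (-s)) (-exp (-t)) t := by
    simpa using (hasDerivAt_neg t).exp
  rw [intervalIntegral.integral_eq_sub_of_hasDerivAt (fun t _ => hderiv t)
    ((by fun_prop : Continuous fun t => -exp (-t)).intervalIntegrable a b)]

lemma exp_neg_mul_sub_exp_neg_mul_eq_integral {χ χ' : ℝ → ℝ}
    (hχ : ∀ a b, χ b - χ a = ∫ x in a..b, χ' x) (hχ' : LocallyIntegrable χ' volume) (a b : ℝ) :
    exp (-b) * χ b - exp (-a) * χ a = ∫ t in a..b, exp (-t) * (χ' t - χ t) := by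
  rw [mul_sub_mul_eq_integral exp_neg_sub_exp_neg_eq_integral hχ
    (by fun_prop : Continuous fun t => -exp (-t)).locallyIntegrable hχ']
  congr 1; funext t; ring

/-- For a test function `h`, this is the action of the distribution `u - u''` on `h`. -/
def h1Inner (u u' h h' : ℝ → ℝ) : ℝ := (∫ x, u x * h x) + ∫ x, u' x * h' x

lemma testH1_exp_neg_mul {χ χ' : ℝ → ℝ} {a b M : ℝ}
    (hχ : ∀ a b, χ b - χ a = ∫ x in a..b, χ' x) (hχ'm : Measurable χ') (hχ'M : ∀ t, |χ' t| ≤ M)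
    (hχ0 : ∀ t ∉ Icc a b, χ t = 0) (hχ'0 : ∀ t ∉ Icc a b, χ' t = 0) :
    TestH1 (fun t => exp (-t) * χ t) (fun t => exp (-t) * (χ' t - χ t)) := by
  have hχ' : LocallyIntegrable χ' volume := (memLp_one_iff_integrable.1
    (memLp_of_abs_le_of_eq_zero_off hχ'm.aestronglyMeasurable hχ'M hχ'0 1)).locallyIntegrable
  have hχc : Continuous χ := continuous_of_forall_sub_eq hχ hχ'
  have hsupp : HasCompactSupport fun t => exp (-t) * χ t :=
    HasCompactSupport.intro isCompact_Icc fun t ht => by rw [hχ0 t ht, mul_zero]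
  refine ⟨hsupp, by fun_prop, exp_neg_mul_sub_exp_neg_mul_eq_integral hχ hχ', ?_⟩
  have hexpχ' : MemLp (fun t => exp (-t) * χ' t) 2 volume := by
    refine memLp_of_abs_le_of_eq_zero_off (M := exp (-a) * M) (a := a) (b := b) (by fun_prop)
      (fun t => ?_) (fun t ht => by rw [hχ'0 t ht, mul_zero]) 2
    by_cases ht : t ∈ Icc a b
    · rw [abs_mul, abs_of_pos (exp_pos _)]
      exact mul_le_mul (exp_le_exp.2 (neg_le_neg ht.1)) (hχ'M t) (abs_nonneg _) (exp_pos _).le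
    · rw [hχ'0 t ht, mul_zero, abs_zero]
      exact mul_nonneg (exp_pos _).le ((abs_nonneg _).trans (hχ'M t))
  convert hexpχ'.sub ((by fun_prop : Continuous fun t => exp (-t) * χ t).memLp_of_hasCompactSupport
    hsupp) using 1
  funext t; simp only [Pi.sub_apply]; ring

lemma h1Inner_exp_neg_mul {u u' χ χ' : ℝ → ℝ} {a b M : ℝ}
    (hu : ∀ a b, u b - u a = ∫ x in a..b, u' x) (hu' : LocallyIntegrable u' volume)
    (hχ : ∀ a b, χ b - χ a = ∫ x in a..b, χ' x) (hχ'm : Measurable χ') (hχ'M : ∀ t, |χ' t| ≤ M)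
    (hab : a ≤ b) (hχ0 : ∀ t ∉ Ioo a b, χ t = 0) (hχ'0 : ∀ t ∉ Icc a b, χ' t = 0) :
    h1Inner u u' (fun t => exp (-t) * χ t) (fun t => exp (-t) * (χ' t - χ t)) =
      ∫ t, exp (-t) * (u t + u' t) * χ' t := by
  set h := fun t => exp (-t) * χ t
  set h' := fun t => exp (-t) * (χ' t - χ t)
  have hχ0' (t) (ht : t ∉ Icc a b) : χ t = 0 := hχ0 t fun h => ht (Ioo_subset_Icc_self h)
  have hχ' : LocallyIntegrable χ' volume := (memLp_one_iff_integrable.1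
    (memLp_of_abs_le_of_eq_zero_off hχ'm.aestronglyMeasurable hχ'M hχ'0 1)).locallyIntegrable
  have huc : Continuous u := continuous_of_forall_sub_eq hu hu'
  have hχc : Continuous χ := continuous_of_forall_sub_eq hχ hχ'
  have hhc : Continuous h := by fun_prop
  have hh' : LocallyIntegrable h' volume := by
    convert (hχ'.sub hχc.locallyIntegrable).continuous_mul
      (by fun_prop : Continuous fun t => exp (-t)) using 1
    rfl
  have hu'h' : LocallyIntegrable (fun t => u' t * h' t) volume := by
    convert ((hu'.mul_of_abs_le hχ'm.aestronglyMeasurable hχ'M).continuous_mul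
      (by fun_prop : Continuous fun t => exp (-t))).sub (hu'.mul_continuous hhc) using 1
    funext t; simp only [h', h, Pi.sub_apply]; ring
  have huh : IntervalIntegrable (fun t => u t * h t) volume a b :=
    (huc.mul hhc).intervalIntegrable a b
  have hparts : ∫ t in a..b, u' t * h t + u t * h' t = 0 := by
    rw [← mul_sub_mul_eq_integral hu (exp_neg_mul_sub_exp_neg_mul_eq_integral hχ hχ') hu' hh',
      hχ0 a left_notMem_Ioo, hχ0 b right_notMem_Ioo]
    ring
  unfold h1Inner
  -- adding the boundary term `∫ (u h)' = 0` cancels the terms in `χ`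
  rw [integral_eq_intervalIntegral_of_eq_zero_off hab (fun t ht => by simp [h, hχ0' t ht]),
    integral_eq_intervalIntegral_of_eq_zero_off hab
      (fun t ht => by simp [h', hχ0' t ht, hχ'0 t ht]),
    integral_eq_intervalIntegral_of_eq_zero_off hab (fun t ht => by simp [hχ'0 t ht]),
    ← intervalIntegral.integral_add (f := fun t => u t * h t) (g := fun t => u' t * h' t)
      huh (hu'h'.intervalIntegrable a b), ← add_zero (∫ t in a..b, _ + _), ← hparts,
    ← intervalIntegral.integral_add (huh.add (hu'h'.intervalIntegrable a b))
      (((hu'.mul_continuous hhc).intervalIntegrable a b).add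
        ((hh'.continuous_mul huc).intervalIntegrable a b))]
  congr 1; funext t; simp only [h, h']; ring

def ramp (x δ t : ℝ) : ℝ := min (max (t - x) 0) δ

lemma ramp_sub_ramp_eq_integral {x δ : ℝ} (hδ : 0 ≤ δ) (a b : ℝ) :
    ramp x δ b - ramp x δ a = ∫ s in a..b, (Ioc x (x + δ)).indicator 1 s := by
  wlog hab : a ≤ b generalizing a b
  · rw [intervalIntegral.integral_symm, ← this b a (le_of_not_ge hab), neg_sub]
  rw [intervalIntegral.integral_of_le hab, integral_indicator measurableSet_Ioc,
    Measure.restrict_restrict measurableSet_Ioc, Ioc_inter_Ioc, Pi.one_def, setIntegral_const,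
    smul_eq_mul, mul_one, measureReal_def, Real.volume_Ioc, ramp, ramp]
  rcases le_total ((x + δ) ⊓ b - x ⊔ a) 0 with hle | hle
  · rw [ENNReal.ofReal_of_nonpos hle, ENNReal.toReal_zero]
    simp only [min_def, max_def] at hle ⊢
    split_ifs at hle ⊢ <;> linarith
  · rw [ENNReal.toReal_ofReal hle]
    simp only [min_def, max_def] at hle ⊢
    split_ifs at hle ⊢ <;> linarith

lemma ramp_le_ramp {x y δ : ℝ} (hxy : x ≤ y) (t : ℝ) : ramp y δ t ≤ ramp x δ t :=
  min_le_min_right _ (max_le_max_right _ (by linarith))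

lemma ramp_of_le {x δ t : ℝ} (hδ : 0 ≤ δ) (ht : t ≤ x) : ramp x δ t = 0 := by
  rw [ramp, max_eq_right (by linarith), min_eq_left hδ]

lemma ramp_of_ge {x δ t : ℝ} (ht : x + δ ≤ t) : ramp x δ t = δ := by
  rw [ramp, min_eq_right (le_max_of_le_left (by linarith))]

lemma ramp_sub_ramp_of_notMem_Ioo {x y δ t : ℝ} (hxy : x ≤ y) (hδ : 0 ≤ δ)
    (ht : t ∉ Ioo x (y + δ)) : ramp x δ t - ramp y δ t = 0 := by
  rcases not_and_or.1 ht with ht | ht <;> rw [not_lt] at ht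
  · rw [ramp_of_le hδ ht, ramp_of_le hδ (ht.trans hxy), sub_zero]
  · rw [ramp_of_ge ht, ramp_of_ge (by linarith : x + δ ≤ t), sub_self]

lemma ramp_sub_ramp_sub_eq_integral {x y δ : ℝ} (hδ : 0 ≤ δ) (a b : ℝ) :
    (ramp x δ b - ramp y δ b) - (ramp x δ a - ramp y δ a) =
      ∫ s in a..b, (Ioc x (x + δ)).indicator 1 s - (Ioc y (y + δ)).indicator 1 s := by
  have hint (c d : ℝ) : IntervalIntegrable ((Ioc c d).indicator (1 : ℝ → ℝ)) volume a b :=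
    ((integrable_indicator_iff measurableSet_Ioc).2
      (integrableOn_const measure_Ioc_lt_top.ne)).intervalIntegrable
  rw [intervalIntegral.integral_sub (hint _ _) (hint _ _), ← ramp_sub_ramp_eq_integral hδ,
    ← ramp_sub_ramp_eq_integral hδ]
  ring

lemma integral_mul_indicator_sub_indicator {f : ℝ → ℝ} (hf : LocallyIntegrable f volume)
    (a b c d : ℝ) :
    ∫ t, f t * ((Ioc a b).indicator 1 t - (Ioc c d).indicator 1 t) =
      (∫ t in Ioc a b, f t) - ∫ t in Ioc c d, f t := by
  have hint (p q : ℝ) : Integrable ((Ioc p q).indicator f) volume :=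
    (integrable_indicator_iff measurableSet_Ioc).2
      ((hf.integrableOn_isCompact isCompact_Icc).mono_set Ioc_subset_Icc_self)
  have hsplit (t : ℝ) : f t * ((Ioc a b).indicator 1 t - (Ioc c d).indicator 1 t) =
      (Ioc a b).indicator f t - (Ioc c d).indicator f t := by
    simp only [indicator_apply]
    split_ifs <;> simp
  simp_rw [hsplit]
  rw [integral_sub (hint a b) (hint c d), integral_indicator measurableSet_Ioc,
    integral_indicator measurableSet_Ioc]

lemma locallyIntegrable_exp_neg_mul_add {u u' : ℝ → ℝ}
    (hu : ∀ a b, u b - u a = ∫ x in a..b, u' x) (hu' : LocallyIntegrable u' volume) :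
    LocallyIntegrable (fun t => exp (-t) * (u t + u' t)) volume :=
  ((continuous_of_forall_sub_eq hu hu').locallyIntegrable.add hu').continuous_mul
    (by fun_prop : Continuous fun t => exp (-t))

lemma setIntegral_Ioc_exp_neg_mul_add_le {u u' : ℝ → ℝ}
    (hu : ∀ a b, u b - u a = ∫ x in a..b, u' x) (hu' : LocallyIntegrable u' volume)
    (hpos : ∀ h h', TestH1 h h' → 0 ≤ h → 0 ≤ h1Inner u u' h h')
    {x y δ : ℝ} (hxy : x ≤ y) (hδ : 0 < δ) :
    ∫ t in Ioc y (y + δ), exp (-t) * (u t + u' t) ≤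
      ∫ t in Ioc x (x + δ), exp (-t) * (u t + u' t) := by
  set χ : ℝ → ℝ := fun t => ramp x δ t - ramp y δ t
  set χ' : ℝ → ℝ := fun t => (Ioc x (x + δ)).indicator 1 t - (Ioc y (y + δ)).indicator 1 t
  have hχ'm : Measurable χ' :=
    (measurable_one.indicator measurableSet_Ioc).sub (measurable_one.indicator measurableSet_Ioc)
  have hχ'M (t : ℝ) : |χ' t| ≤ 1 := by
    simp only [χ', indicator_apply]
    split_ifs <;> norm_num
  have hχ0 (t : ℝ) (ht : t ∉ Ioo x (y + δ)) : χ t = 0 := ramp_sub_ramp_of_notMem_Ioo hxy hδ.le ht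
  have hχ'0 (t : ℝ) (ht : t ∉ Icc x (y + δ)) : χ' t = 0 := by
    have hx : t ∉ Ioc x (x + δ) := fun h => ht ⟨h.1.le, h.2.trans (by linarith)⟩
    have hy : t ∉ Ioc y (y + δ) := fun h => ht ⟨hxy.trans h.1.le, h.2⟩
    simp only [χ', indicator_of_notMem hx, indicator_of_notMem hy, sub_zero]
  have hχnn (t : ℝ) : 0 ≤ exp (-t) * χ t :=
    mul_nonneg (exp_pos _).le (sub_nonneg.2 (ramp_le_ramp hxy t))
  have hχ := ramp_sub_ramp_sub_eq_integral (x := x) (y := y) hδ.le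
  have key := hpos _ _ (testH1_exp_neg_mul hχ hχ'm hχ'M
    (fun t ht => hχ0 t fun h => ht (Ioo_subset_Icc_self h)) hχ'0) hχnn
  rwa [h1Inner_exp_neg_mul hu hu' hχ hχ'm hχ'M (by linarith) hχ0 hχ'0,
    integral_mul_indicator_sub_indicator (locallyIntegrable_exp_neg_mul_add hu hu'),
    sub_nonneg] at key

lemma exists_antitone_ae_eq_of_antitoneOn {f : ℝ → ℝ} {E : Set ℝ} (hE : ∀ᵐ x, x ∈ E)
    (hf : AntitoneOn f E) : ∃ g : ℝ → ℝ, Antitone g ∧ f =ᵐ[volume] g := by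
  have hmeet (s : Set ℝ) (hs : volume s = ⊤) : (s ∩ E).Nonempty :=
    nonempty_of_measure_ne_zero (by rw [measure_inter_conull (ae_iff.1 hE), hs]; simp)
  have hne (t : ℝ) : (f '' (E ∩ Iic t)).Nonempty :=
    let ⟨e, het, he⟩ := hmeet (Iic t) Real.volume_Iic
    ⟨f e, e, ⟨he, het⟩, rfl⟩
  have hbdd (t : ℝ) : BddBelow (f '' (E ∩ Iic t)) := by
    obtain ⟨e, hte, he⟩ := hmeet (Ici t) Real.volume_Ici
    refine ⟨f e, ?_⟩
    rintro _ ⟨w, ⟨hw, hwt⟩, rfl⟩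
    exact hf hw he (hwt.trans hte)
  refine ⟨fun t => sInf (f '' (E ∩ Iic t)), fun s t hst => ?_, ?_⟩
  · exact csInf_le_csInf (hbdd t) (hne s)
      (image_mono (inter_subset_inter_right E (Iic_subset_Iic.2 hst)))
  · filter_upwards [hE] with a ha
    refine le_antisymm ?_ (csInf_le (hbdd a) ⟨a, ⟨ha, le_refl a⟩, rfl⟩)
    refine le_csInf (hne a) ?_
    rintro _ ⟨w, ⟨hw, hwa⟩, rfl⟩
    exact hf hw ha hwa

lemma exists_antitone_ae_eq_of_setIntegral_Ioc_antitone {f : ℝ → ℝ}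
    (hf : LocallyIntegrable f volume)
    (hmono : ∀ x y δ : ℝ, x ≤ y → 0 < δ → ∫ t in Ioc y (y + δ), f t ≤ ∫ t in Ioc x (x + δ), f t) :
    ∃ g : ℝ → ℝ, Antitone g ∧ f =ᵐ[volume] g := by
  refine exists_antitone_ae_eq_of_antitoneOn (LocallyIntegrable.ae_hasDerivAt_integral hf) ?_
  intro a ha b hb hab
  have hslope {x : ℝ} (hx : ∀ c, HasDerivAt (fun y => ∫ t in c..y, f t) (f x) x) :
      Tendsto (fun δ => δ⁻¹ * ∫ t in Ioc x (x + δ), f t) (𝓝[>] 0) (𝓝 (f x)) := by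
    refine ((hx x).tendsto_slope_zero_right).congr' ?_
    filter_upwards [self_mem_nhdsWithin] with δ (hδ : 0 < δ)
    rw [intervalIntegral.integral_same, sub_zero, smul_eq_mul,
      intervalIntegral.integral_of_le (by linarith)]
  refine le_of_tendsto_of_tendsto (hslope hb) (hslope ha) ?_
  filter_upwards [self_mem_nhdsWithin] with δ (hδ : 0 < δ)
  exact mul_le_mul_of_nonneg_left (hmono a b δ hab hδ) (inv_nonneg.2 hδ.le)

section AntitoneWeight

variable {g : ℝ → ℝ}

lemma Antitone.nonneg_of_eventually_lintegral_Ioi_ne_top (hg : Antitone g)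
    (hfin : ∀ᶠ x in atTop, ∫⁻ s in Ioi x, ENNReal.ofReal (exp s * g s ^ 2) ≠ ⊤) (t : ℝ) :
    0 ≤ g t := by
  by_contra! hneg
  obtain ⟨x, hx, htx⟩ := (hfin.and (eventually_ge_atTop t)).exists
  refine hx (eq_top_iff.2 ?_)
  calc ⊤ = ∫⁻ _ in Ioi x, ENNReal.ofReal (exp x * g t ^ 2) := by
        rw [setLIntegral_const, Real.volume_Ioi, ENNReal.mul_top]
        exact (ENNReal.ofReal_pos.2 (mul_pos (exp_pos _) (by nlinarith))).ne'
    _ ≤ ∫⁻ s in Ioi x, ENNReal.ofReal (exp s * g s ^ 2) := by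
        refine setLIntegral_mono (by have := hg.measurable; fun_prop) fun s hs => ?_
        have hgs : g s ≤ g t := hg (htx.trans (le_of_lt hs))
        exact ENNReal.ofReal_le_ofReal (mul_le_mul (exp_le_exp.2 (le_of_lt hs))
          (by nlinarith) (sq_nonneg _) (exp_pos _).le)

lemma Antitone.ofReal_exp_mul_sq_le_lintegral (hg : Antitone g) {t : ℝ} (ht : 0 ≤ g t) :
    ENNReal.ofReal (exp (t - 1) * g t ^ 2) ≤
      ∫⁻ s in Ioo (t - 1) t, ENNReal.ofReal (exp s * g s ^ 2) :=
  calc ENNReal.ofReal (exp (t - 1) * g t ^ 2)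
      = ∫⁻ _ in Ioo (t - 1) t, ENNReal.ofReal (exp (t - 1) * g t ^ 2) := by
        rw [setLIntegral_const, Real.volume_Ioo, sub_sub_cancel, ENNReal.ofReal_one, mul_one]
    _ ≤ ∫⁻ s in Ioo (t - 1) t, ENNReal.ofReal (exp s * g s ^ 2) := by
        refine setLIntegral_mono (by have := hg.measurable; fun_prop) fun s hs => ?_
        have hgs : g t ≤ g s := hg hs.2.le
        exact ENNReal.ofReal_le_ofReal (mul_le_mul (exp_le_exp.2 hs.1.le)
          (by nlinarith) (sq_nonneg _) (exp_pos _).le)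

lemma Antitone.exists_abs_exp_mul_le (hg : Antitone g)
    (hminus : ∫⁻ s in Iio 0, ENNReal.ofReal (exp s * g s ^ 2) < ⊤)
    (hplus : limsup (fun x => ENNReal.ofReal (exp x) *
      ∫⁻ s in Ioi x, ENNReal.ofReal (exp s * g s ^ 2)) atTop < ⊤) :
    ∃ C, ∀ t, |exp t * g t| ≤ C := by
  set I := fun x => ∫⁻ s in Ioi x, ENNReal.ofReal (exp s * g s ^ 2)
  obtain ⟨B, hB, hBtop⟩ := exists_between hplus
  have hev := eventually_lt_of_limsup_lt hB
  have hnn := hg.nonneg_of_eventually_lintegral_Ioi_ne_top <| hev.mono fun x hx =>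
    (ENNReal.lt_top_of_mul_ne_top_right (hx.trans hBtop).ne
      (ENNReal.ofReal_pos.2 (exp_pos x)).ne').ne
  obtain ⟨X, hX⟩ := eventually_atTop.1 hev
  set J := ∫⁻ s in Iio 0, ENNReal.ofReal (exp s * g s ^ 2)
  set K := max (ENNReal.ofReal (exp 1) * J) (max (ENNReal.ofReal (exp 2) * B)
    (ENNReal.ofReal ((exp (X + 1) * g 0) ^ 2)))
  have hK : K < ⊤ := max_lt (ENNReal.mul_lt_top ENNReal.ofReal_lt_top hminus)
    (max_lt (ENNReal.mul_lt_top ENNReal.ofReal_lt_top hBtop) ENNReal.ofReal_lt_top)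
  have hsplit (t : ℝ) :
      (exp t * g t) ^ 2 = exp 2 * (exp (t - 1) * (exp (t - 1) * g t ^ 2)) := by
    rw [show exp 2 = exp 1 * exp 1 by rw [← exp_add]; norm_num]
    rw [show exp t = exp 1 * exp (t - 1) by rw [← exp_add]; ring_nf]
    ring
  have hbound (t : ℝ) : ENNReal.ofReal ((exp t * g t) ^ 2) ≤ K := by
    have hloc := hg.ofReal_exp_mul_sq_le_lintegral (hnn t)
    rcases le_or_gt t 0 with ht | ht
    · refine le_max_of_le_left ?_
      rw [show (exp t * g t) ^ 2 = exp (t + 1) * (exp (t - 1) * g t ^ 2) by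
        rw [mul_pow, ← mul_assoc, ← exp_add, sq (exp t), ← exp_add]; ring_nf,
        ENNReal.ofReal_mul (exp_pos _).le]
      exact mul_le_mul' (ENNReal.ofReal_le_ofReal (exp_le_exp.2 (by linarith)))
        (hloc.trans (lintegral_mono_set fun s hs => lt_of_lt_of_le hs.2 ht))
    rcases le_or_gt t (X + 1) with ht' | ht'
    · refine le_max_of_le_right (le_max_of_le_right (ENNReal.ofReal_le_ofReal ?_))
      exact pow_le_pow_left₀ (mul_nonneg (exp_pos _).le (hnn t))
        (mul_le_mul (exp_le_exp.2 ht') (hg ht.le) (hnn t) (exp_pos _).le) 2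
    · refine le_max_of_le_right (le_max_of_le_left ?_)
      rw [hsplit, ENNReal.ofReal_mul (exp_pos _).le, ENNReal.ofReal_mul (exp_pos _).le]
      gcongr
      refine le_of_lt ?_
      calc ENNReal.ofReal (exp (t - 1)) * ENNReal.ofReal (exp (t - 1) * g t ^ 2)
          ≤ ENNReal.ofReal (exp (t - 1)) * I (t - 1) :=
            by gcongr; exact hloc.trans (lintegral_mono_set Ioo_subset_Ioi_self)
        _ < B := hX (t - 1) (by linarith)
  refine ⟨√K.toReal, fun t => ?_⟩
  rw [← Real.sqrt_sq_eq_abs]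
  exact Real.sqrt_le_sqrt ((ENNReal.ofReal_le_iff_le_toReal hK.ne).1 (hbound t))

end AntitoneWeight

lemma lintegral_Ioi_ofReal_exp_neg (x : ℝ) :
    ∫⁻ s in Ioi x, ENNReal.ofReal (exp (-s)) = ENNReal.ofReal (exp (-x)) := by
  rw [← ofReal_integral_eq_lintegral_ofReal, integral_exp_neg_Ioi]
  · simpa [IntegrableOn] using exp_neg_integrableOn_Ioi x one_pos
  · exact ae_of_all _ fun s => (exp_pos _).le

lemma limsup_exp_mul_lintegral_Ioi_lt_top {v : ℝ → ℝ} (hv : MemLp v ⊤ volume) :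
    limsup (fun x => ENNReal.ofReal (exp x) *
      ∫⁻ s in Ioi x, ENNReal.ofReal (exp (-s) * v s ^ 2)) atTop < ⊤ := by
  set N := eLpNormEssSup v volume
  have hN : N < ⊤ := by simpa only [eLpNorm_exponent_top] using hv.2
  have hbound (x : ℝ) :
      ENNReal.ofReal (exp x) * ∫⁻ s in Ioi x, ENNReal.ofReal (exp (-s) * v s ^ 2) ≤ N ^ 2 :=
    calc ENNReal.ofReal (exp x) * ∫⁻ s in Ioi x, ENNReal.ofReal (exp (-s) * v s ^ 2)
        ≤ ENNReal.ofReal (exp x) * ∫⁻ s in Ioi x, ENNReal.ofReal (exp (-s)) * N ^ 2 := by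
          refine mul_le_mul' le_rfl (lintegral_mono_ae (ae_restrict_of_ae ?_))
          filter_upwards [ae_le_eLpNormEssSup (f := v) (μ := volume)] with s hs
          rw [ENNReal.ofReal_mul (exp_pos _).le, ← sq_abs, ENNReal.ofReal_pow (abs_nonneg _),
            ← Real.enorm_eq_ofReal_abs]
          gcongr
      _ = N ^ 2 := by
          rw [lintegral_mul_const' _ _ (ENNReal.pow_ne_top hN.ne), lintegral_Ioi_ofReal_exp_neg,
            ← mul_assoc, ← ENNReal.ofReal_mul (exp_pos _).le, ← exp_add, add_neg_cancel, exp_zero,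
            ENNReal.ofReal_one, one_mul]
  exact (limsup_le_of_le (by isBoundedDefault) (Eventually.of_forall hbound)).trans_lt
    (ENNReal.pow_lt_top hN)

lemma PhaseD.memLp_top_add {D : PhaseD} (hυ : D.υ = 0) {ν : Measure ℝ} (hν : PosMeasRepr D ν) :
    MemLp (fun x => D.u x + D.u' x) ⊤ volume := by
  have huc := continuous_of_forall_sub_eq D.ftc D.locInt
  have hpos (h h' : ℝ → ℝ) (ht : TestH1 h h') (hh : 0 ≤ h) : 0 ≤ h1Inner D.u D.u' h h' :=
    by rw [h1Inner, ← hν h h' ht]; exact integral_nonneg hh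
  obtain ⟨g, hg, hfg⟩ := exists_antitone_ae_eq_of_setIntegral_Ioc_antitone
    (locallyIntegrable_exp_neg_mul_add D.ftc D.locInt)
    fun x y δ hxy hδ => setIntegral_Ioc_exp_neg_mul_add_le D.ftc D.locInt hpos hxy hδ
  have hweight : ∀ᵐ s, ENNReal.ofReal (exp s * g s ^ 2) =
      ENNReal.ofReal (exp (-s) * (D.u s + D.u' s) ^ 2) := by
    filter_upwards [hfg] with s hs
    rw [← hs, exp_neg]
    congr 1
    field_simp
  have hminus : ∫⁻ s in Iio 0, ENNReal.ofReal (exp s * g s ^ 2) < ⊤ := by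
    rw [lintegral_congr_ae (ae_restrict_of_ae hweight)]
    refine lt_of_le_of_lt ?_ (ENNReal.mul_lt_top (ENNReal.ofReal_lt_top (r := 2))
      ((le_self_add).trans_lt D.minusCond))
    rw [← lintegral_const_mul' _ _ ENNReal.ofReal_ne_top]
    refine lintegral_mono fun s => ?_
    rw [← ENNReal.ofReal_mul zero_le_two]
    exact ENNReal.ofReal_le_ofReal (by nlinarith [exp_pos (-s), sq_nonneg (D.u s - D.u' s)])
  have hplus := D.plusCond
  simp only [hυ, Measure.restrict_zero, lintegral_zero_measure, add_zero,
    ← lintegral_congr_ae (ae_restrict_of_ae hweight)] at hplus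
  obtain ⟨C, hC⟩ := hg.exists_abs_exp_mul_le hminus hplus
  refine memLp_top_of_bound (huc.measurable.add D.meas_u').aestronglyMeasurable C ?_
  filter_upwards [hfg] with t ht
  have hexp : D.u t + D.u' t = exp t * g t := by
    rw [← ht, ← mul_assoc, ← exp_add, add_neg_cancel, exp_zero, one_mul]
  rw [Real.norm_eq_abs, hexp]
  exact hC t

lemma PhaseD.goodPlusU {D : PhaseD} (hυ : D.υ = 0) {ν : Measure ℝ} (hν : PosMeasRepr D ν) :
    GoodPlusU D.u :=
  ⟨D.u', ν, D.meas_u', D.ftc, D.locInt, D.locSq, hν, D.memLp_top_add hυ hν,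
    le_self_add.trans_lt D.minusCond⟩

lemma PhaseD.μ_eq_of_u_eq {D₁ D₂ : PhaseD} (hυ₁ : D₁.υ = 0) (hυ₂ : D₂.υ = 0) (hu : D₁.u = D₂.u) :
    D₁.μ = D₂.μ := by
  have hu' : D₁.u' =ᵐ[volume] D₂.u' :=
    ae_eq_of_forall_sub_eq D₁.ftc (hu ▸ D₂.ftc) D₁.locInt D₂.locInt
  rw [D₁.decomp, D₂.decomp, hυ₁, hυ₂, hu]
  congr 1
  exact withDensity_congr_ae (hu'.mono fun x hx => by simp only [hx])

lemma GoodPlusU.exists_phaseD {u : ℝ → ℝ} (hu : GoodPlusU u) :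
    ∃ D : PhaseD, D.υ = 0 ∧ (∃ ν : Measure ℝ, PosMeasRepr D ν) ∧ D.u = u := by
  obtain ⟨u', ν, hu'm, hftc, hloc, hsq, hν, hbdd, hminus⟩ := hu
  refine ⟨{ u := u
            u' := u'
            μ := volume.withDensity fun x => ENNReal.ofReal (u x ^ 2 + u' x ^ 2)
            υ := 0
            meas_u' := hu'm
            ftc := hftc
            locInt := hloc
            locSq := hsq
            decomp := (zero_add _).symm
            minusCond := ?_
            plusCond := ?_ }, rfl, ⟨ν, hν⟩, rfl⟩
  · simpa using hminus
  · simpa using limsup_exp_mul_lintegral_Ioi_lt_top hbdd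

/-- The map `(u,μ) ↦ u` is a bijection between `𝒟⁺` and the set of
real-valued `u ∈ H¹_loc(ℝ)` such that `u - u''` is a positive Borel measure,
`u + u' ∈ L^∞(ℝ)` and `∫_{-∞}^0 e^{-x}(u² + u'²) dx < ∞`: it maps into this set, is
injective on `𝒟⁺` (the pair `(u,μ)` is determined by `u`), and onto. -/
theorem statement16 :
    (∀ D : PhaseD, D.υ = 0 → (∃ ν : Measure ℝ, PosMeasRepr D ν) → GoodPlusU D.u) ∧
      (∀ D₁ D₂ : PhaseD, D₁.υ = 0 → D₂.υ = 0 →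
        (∃ ν : Measure ℝ, PosMeasRepr D₁ ν) → (∃ ν : Measure ℝ, PosMeasRepr D₂ ν) →
        D₁.u = D₂.u → D₁.μ = D₂.μ) ∧
      ∀ u : ℝ → ℝ, GoodPlusU u →
        ∃ D : PhaseD, D.υ = 0 ∧ (∃ ν : Measure ℝ, PosMeasRepr D ν) ∧ D.u = u :=
  ⟨fun _ hυ ⟨_, hν⟩ => PhaseD.goodPlusU hυ hν,
    fun _ _ hυ₁ hυ₂ _ _ hu => PhaseD.μ_eq_of_u_eq hυ₁ hυ₂ hu,
    fun _ hu => hu.exists_phaseD⟩
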